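/- In the setting of the projections P and Q on S × S defined from a 2-dimensional Clifford module (with γ(e₁), γ(e₂) skew-adjoint with respect to an inner product on S and satisfying the Clifford relation for an orthonormal basis e₁, e₂), the ranges of P and Q are orthogonal: for all χ, ζ ∈ S × S, ⟨P(χ), Q(ζ)⟩ = 0, where ⟨·,·⟩ is the componentwise inner product ⟨χ, ζ⟩ = ⟨χ¹, ζ¹⟩ + ⟨χ², ζ²⟩. -/

import Mathlib

/-- The projection `P` on `S × S ≅ S ⊗ V`, in components `P(χ)^β = -(1/2) γ_β γ_α χ^α`. -/
noncomputable def cliffordP {S : Type*} [AddCommGroup S] [Module ℝ S]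
    (γ : Fin 2 → Module.End ℝ S) (χ : Fin 2 → S) : Fin 2 → S :=
  fun β => -((1/2 : ℝ) • γ β (∑ α, γ α (χ α)))

/-- The projection `Q` on `S × S ≅ S ⊗ V`, in components `Q(χ)^β = -(1/2) γ_α γ_β χ^α`. -/
noncomputable def cliffordQ {S : Type*} [AddCommGroup S] [Module ℝ S]
    (γ : Fin 2 → Module.End ℝ S) (χ : Fin 2 → S) : Fin 2 → S :=
  fun β => -((1/2 : ℝ) • ∑ α, γ α (γ β (χ α)))

/-- The ranges of `P` and `Q` are orthogonal with respect to the
componentwise inner product `⟨χ, ζ⟩ = ∑ β ⟨χ^β, ζ^β⟩`. -/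
theorem cliffordP_orthogonal_cliffordQ
    (S : Type*) [NormedAddCommGroup S] [InnerProductSpace ℝ S]
    (γ : Fin 2 → Module.End ℝ S)
    (hClifford : ∀ α β, γ α * γ β + γ β * γ α
      = (if α = β then (-2 : ℝ) else 0) • (1 : Module.End ℝ S))
    (hskew : ∀ (α : Fin 2) (a b : S), (inner ℝ (γ α a) b : ℝ) = - inner ℝ a (γ α b)) :
    ∀ χ ζ : Fin 2 → S, ∑ β, (inner ℝ (cliffordP γ χ β) (cliffordQ γ ζ β) : ℝ) = 0 := by
  intro χ ζ
  have sq : ∀ (α : Fin 2) (x : S), γ α (γ α x) = -x := by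
    intro α x
    have h := DFunLike.congr_fun (hClifford α α) x
    simp only [if_pos rfl, LinearMap.add_apply, Module.End.mul_apply,
      LinearMap.smul_apply, Module.End.one_apply] at h
    have h2 := congrArg (fun y => (1/2 : ℝ) • y) h
    simp only [smul_add, smul_smul, ← add_smul] at h2
    norm_num at h2
    exact h2
  have anti : ∀ x : S, γ 0 (γ 1 x) = - γ 1 (γ 0 x) := by
    intro x
    have h := DFunLike.congr_fun (hClifford 0 1) x
    rw [if_neg (by decide), zero_smul] at h
    simp only [LinearMap.add_apply, Module.End.mul_apply, LinearMap.zero_apply] at h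
    exact eq_neg_of_add_eq_zero_left h
  simp only [cliffordP, cliffordQ, Fin.sum_univ_two]
  have key : ∀ (β : Fin 2) (v : S),
      (inner ℝ (-((1/2:ℝ) • γ β (γ 0 (χ 0) + γ 1 (χ 1)))) (-((1/2:ℝ) • v)) : ℝ)
        = -(1/4) * inner ℝ (γ 0 (χ 0) + γ 1 (χ 1)) (γ β v) := by
    intro β v
    rw [inner_neg_neg, real_inner_smul_left, real_inner_smul_right, hskew]
    ring
  rw [key, key]
  have h0 : γ 0 (γ 0 (γ 0 (ζ 0)) + γ 1 (γ 0 (ζ 1))) = -(γ 0 (ζ 0)) + γ 1 (ζ 1) := by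
    rw [map_add, sq, anti (γ 0 (ζ 1)), sq, map_neg, neg_neg]
  have h1 : γ 1 (γ 0 (γ 1 (ζ 0)) + γ 1 (γ 1 (ζ 1))) = γ 0 (ζ 0) + -(γ 1 (ζ 1)) := by
    rw [map_add, sq, anti (ζ 0), map_neg, sq]; abel
  rw [h0, h1]
  have : (γ 0 (ζ 0) + -(γ 1 (ζ 1))) = -(-(γ 0 (ζ 0)) + γ 1 (ζ 1)) := by abel
  rw [this, inner_neg_right]
  ring
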